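/- For every set H ⊆ ℝ, the set {x ∈ H : H is porous at x} of points of H at which H is porous has Lebesgue outer measure zero. -/

import Mathlib

open MeasureTheory Filter Topology

/-- `gapLength H x ε` is the supremum of the lengths of the intervals contained in
`(x - ε, x + ε) \ H`. -/
noncomputable def gapLength (H : Set ℝ) (x ε : ℝ) : ℝ :=
  sSup {l : ℝ | ∃ a b : ℝ, l = b - a ∧ Set.Ioo a b ⊆ Set.Ioo (x - ε) (x + ε) \ H}

/-- A set `H ⊆ ℝ` is porous at `x` if `limsup_{ε → 0+} gapLength H x ε / ε > 0`. -/
def PorousAt (H : Set ℝ) (x : ℝ) : Prop :=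
  0 < Filter.limsup (fun ε => gapLength H x ε / ε) (𝓝[>] (0 : ℝ))

/-!
By the Lebesgue density theorem (valid for arbitrary, possibly non-measurable, sets), almost
every point `x` of `H` satisfies `λ*(H ∩ [x - ε, x + ε]) / 2ε → 1`. At a porous point there are
arbitrarily small `ε` for which `(x - ε, x + ε)` contains a gap of `H` of length `> c ε`, so this
density ratio is at most `1 - c / 2` along those `ε`.
-/

lemma measure_inter_le_sub_of_disjoint {α : Type*} [MeasurableSpace α] (μ : Measure α)
    {s t u : Set α} (htu : t ⊆ u) (ht : NullMeasurableSet t μ) (hμt : μ t ≠ ⊤)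
    (hst : Disjoint s t) : μ (s ∩ u) ≤ μ u - μ t := by
  rw [← measure_sdiff htu ht hμt]
  exact measure_mono fun y hy => ⟨hy.2, hst.notMem_of_mem_left hy.1⟩

def gapSet (H : Set ℝ) (x ε : ℝ) : Set ℝ :=
  {l : ℝ | ∃ a b : ℝ, l = b - a ∧ Set.Ioo a b ⊆ Set.Ioo (x - ε) (x + ε) \ H}

lemma gapLength_eq_sSup_gapSet (H : Set ℝ) (x ε : ℝ) : gapLength H x ε = sSup (gapSet H x ε) :=
  rfl

lemma zero_mem_gapSet (H : Set ℝ) (x ε : ℝ) : 0 ∈ gapSet H x ε :=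
  ⟨0, 0, by simp, by simp⟩

lemma gapLength_nonneg (H : Set ℝ) (x ε : ℝ) : 0 ≤ gapLength H x ε := by
  rw [gapLength_eq_sSup_gapSet]
  by_cases hbdd : BddAbove (gapSet H x ε)
  · exact le_csSup hbdd (zero_mem_gapSet H x ε)
  · exact (Real.sSup_of_not_bddAbove hbdd).ge

lemma exists_gap_of_lt_gapLength {H : Set ℝ} {x ε l : ℝ} (hl : l < gapLength H x ε) :
    ∃ a b : ℝ, l < b - a ∧ Set.Ioo a b ⊆ Set.Ioo (x - ε) (x + ε) \ H := by
  obtain ⟨_, ⟨a, b, rfl, hgap⟩, hlt⟩ := exists_lt_of_lt_csSup ⟨0, zero_mem_gapSet H x ε⟩ hl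
  exact ⟨a, b, hlt, hgap⟩

lemma volume_inter_closedBall_div_le_of_gap {H : Set ℝ} {x ε a b : ℝ} (hε : 0 < ε)
    (hab : a ≤ b) (hgap : Set.Ioo a b ⊆ Set.Ioo (x - ε) (x + ε) \ H) :
    volume (H ∩ Metric.closedBall x ε) / volume (Metric.closedBall x ε) ≤
      ENNReal.ofReal (1 - (b - a) / (2 * ε)) := by
  have hball : volume (Metric.closedBall x ε) = ENNReal.ofReal (2 * ε) := by
    rw [Real.volume_closedBall]
  have hsub : Set.Ioo a b ⊆ Metric.closedBall x ε := by
    rw [Real.closedBall_eq_Icc]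
    exact fun t ht => Set.Ioo_subset_Icc_self (hgap ht).1
  have hdisj : Disjoint H (Set.Ioo a b) :=
    Set.disjoint_right.2 fun t ht => (hgap ht).2
  have hnum := measure_inter_le_sub_of_disjoint volume hsub measurableSet_Ioo.nullMeasurableSet
    measure_Ioo_lt_top.ne hdisj
  rw [hball, Real.volume_Ioo, ← ENNReal.ofReal_sub _ (sub_nonneg.2 hab)] at hnum
  calc volume (H ∩ Metric.closedBall x ε) / volume (Metric.closedBall x ε)
      ≤ ENNReal.ofReal (2 * ε - (b - a)) / ENNReal.ofReal (2 * ε) := by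
        rw [hball]; exact ENNReal.div_le_div_right hnum _
    _ = ENNReal.ofReal (1 - (b - a) / (2 * ε)) := by
        rw [← ENNReal.ofReal_div_of_pos (by positivity)]
        congr 1
        field_simp

lemma PorousAt.exists_frequently_lt {H : Set ℝ} {x : ℝ} (hx : PorousAt H x) :
    ∃ c > 0, ∃ᶠ ε in 𝓝[>] (0 : ℝ), c < gapLength H x ε / ε := by
  obtain ⟨c, hc, hcL⟩ := exists_between hx
  have hnonneg : ∀ᶠ ε in 𝓝[>] (0 : ℝ), 0 ≤ gapLength H x ε / ε := by
    filter_upwards [self_mem_nhdsWithin] with ε hε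
    exact div_nonneg (gapLength_nonneg H x ε) hε.le
  exact ⟨c, hc, frequently_lt_of_lt_limsup
    (IsCoboundedUnder.of_frequently_ge hnonneg.frequently) hcL⟩

lemma PorousAt.not_tendsto_density {H : Set ℝ} {x : ℝ} (hx : PorousAt H x) :
    ¬ Tendsto (fun r => volume (H ∩ Metric.closedBall x r) / volume (Metric.closedBall x r))
      (𝓝[>] 0) (𝓝 1) := by
  intro hdensity
  obtain ⟨c, hc, hporous⟩ := hx.exists_frequently_lt
  have hlarge : ∀ᶠ r in 𝓝[>] (0 : ℝ), ENNReal.ofReal (1 - c / 2) <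
      volume (H ∩ Metric.closedBall x r) / volume (Metric.closedBall x r) :=
    hdensity (Ioi_mem_nhds (ENNReal.ofReal_lt_one.2 (by linarith)))
  obtain ⟨ε, hgapLength, hratio, hε⟩ :=
    (hporous.and_eventually (hlarge.and self_mem_nhdsWithin)).exists
  have hε : 0 < ε := hε
  obtain ⟨a, b, hlen, hgap⟩ := exists_gap_of_lt_gapLength ((lt_div_iff₀ hε).1 hgapLength)
  have hab : a ≤ b := by nlinarith
  have hratio_le : volume (H ∩ Metric.closedBall x ε) / volume (Metric.closedBall x ε) ≤
      ENNReal.ofReal (1 - c / 2) := by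
    refine (volume_inter_closedBall_div_le_of_gap hε hab hgap).trans (ENNReal.ofReal_le_ofReal ?_)
    have : c / 2 ≤ (b - a) / (2 * ε) := by
      rw [le_div_iff₀ (by positivity)]
      linarith
    linarith
  exact hratio.not_ge hratio_le

/-- For every set `H ⊆ ℝ`, the set of points of `H` at which `H` is porous
has Lebesgue outer measure zero. -/
theorem measure_porousPoints_zero (H : Set ℝ) :
    volume {x | x ∈ H ∧ PorousAt H x} = 0 := by
  have hdensity := Besicovitch.ae_tendsto_measure_inter_div (volume : Measure ℝ) H
  refine measure_mono_null ?_ (Measure.measure_inter_eq_zero_of_restrict (ae_iff.1 hdensity))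
  exact fun x hx => ⟨hx.2.not_tendsto_density, hx.1⟩
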